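/- Let W = [-1,1] × [0,1] ⊂ ℝ² and let u : W → ℝ be defined by u(x¹,x²) = 1 if x¹ > 0 and u(x¹,x²) = 0 if x¹ ≤ 0. Then for 1 ≤ p < ∞ and sufficiently small ε > 0, there is no C¹ function φ on W with ‖u − φ‖_{L^p(W)} + ‖∇φ‖_{L^p(W)} < ε. In particular, if (2 + 2^{1/p'}) ε < 1 with 1/p + 1/p' = 1, no such φ exists. -/

import Mathlib

/-! On a horizontal slice at height `y`, pick `a ∈ (-1, 0]` where `|φ (a, y)|` is at most its mean
and `b ∈ (0, 1]` where `|1 - φ (b, y)|` is at most its mean. Then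
`1 ≤ |φ (a, y)| + |1 - φ (b, y)| + |φ (b, y) - φ (a, y)|`, and the fundamental theorem of calculus
bounds the last term by the integral of `‖Dφ‖` along the slice. Integrating over `y` gives
`1 ≤ ‖u - φ‖_{L¹(W)} + ‖Dφ‖_{L¹(W)}`, and Hölder on `W`, of area `2`, turns this into
`1 ≤ 2 ^ (1 / p') * (‖u - φ‖_{L^p(W)} + ‖Dφ‖_{L^p(W)})`, so already `2 ^ (1 / p') * ε < 1`
rules out `φ`. -/

open MeasureTheory Set

theorem integral_le_rpow_integral_rpow_mul_measureReal_univ {α : Type*} [MeasurableSpace α]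
    {μ : Measure α} [IsFiniteMeasure μ] {p p' : ℝ} (hp : 1 ≤ p) (hpp' : 1 / p + 1 / p' = 1)
    {g : α → ℝ} (hg0 : 0 ≤ᵐ[μ] g) (hg : MemLp g (ENNReal.ofReal p) μ) :
    ∫ x, g x ∂μ ≤ (∫ x, g x ^ p ∂μ) ^ (1 / p) * μ.real univ ^ (1 / p') := by
  rcases hp.eq_or_lt with rfl | hp
  -- `1 / p' = 0` stands in for `p' = ∞` (Lean's `1 / 0 = 0`).
  · have hp' : 1 / p' = 0 := by linarith
    simp [hp']
  · have hpq : p.HolderConjugate p' :=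
      Real.holderConjugate_iff.mpr ⟨hp, by simpa only [one_div] using hpp'⟩
    simpa [integral_const] using integral_mul_le_Lp_mul_Lq_of_nonneg hpq hg0
      (ae_of_all _ fun _ => zero_le_one) hg (memLp_const 1)

theorem ContinuousOn.memLp_restrict_of_isCompact {X E : Type*} [TopologicalSpace X]
    [MeasurableSpace X] [OpensMeasurableSpace X] [T2Space X] [NormedAddCommGroup E]
    [SecondCountableTopologyEither X E] {μ : Measure X} [IsFiniteMeasureOnCompacts μ]
    {K : Set X} (hK : IsCompact K) {f : X → E} (hf : ContinuousOn f K) (p : ENNReal) :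
    MemLp f p (μ.restrict K) := by
  have := isFiniteMeasure_restrict.2 (hK.measure_lt_top (μ := μ)).ne
  obtain ⟨C, hC⟩ := hK.exists_bound_of_continuousOn hf
  exact .of_bound (hf.aestronglyMeasurable hK.measurableSet) C
    ((ae_restrict_iff' hK.measurableSet).2 (ae_of_all _ hC))

theorem memLp_restrict_abs_step_sub {K : Set (ℝ × ℝ)} (hK : IsCompact K) {φ : ℝ × ℝ → ℝ}
    (hφ : Continuous φ) (p : ENNReal) :
    MemLp (fun q => |(if 0 < q.1 then 1 else 0) - φ q|) p (volume.restrict K) := by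
  have := isFiniteMeasure_restrict.2 (hK.measure_lt_top (μ := volume)).ne
  have hstep : MemLp (fun q : ℝ × ℝ => if 0 < q.1 then (1 : ℝ) else 0) p (volume.restrict K) :=
    .of_bound (Measurable.ite (measurableSet_lt measurable_const measurable_fst)
      measurable_const measurable_const).aestronglyMeasurable 1
      (ae_of_all _ fun q => by split_ifs <;> simp)
  exact (hstep.sub (hφ.continuousOn.memLp_restrict_of_isCompact hK p)).abs

theorem exists_le_setIntegral_of_measureReal_eq_one {α : Type*} [MeasurableSpace α]
    {μ : Measure α} {s : Set α} (hs : μ.real s = 1) {f : α → ℝ} (hf : IntegrableOn f s μ) :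
    ∃ x ∈ s, f x ≤ ∫ x in s, f x ∂μ := by
  have hs0 : μ s ≠ 0 := fun h => by simp [measureReal_def, h] at hs
  have hs_top : μ s ≠ ⊤ := fun h => by simp [measureReal_def, h] at hs
  simpa [setAverage_eq, hs] using exists_le_setAverage hs0 hs_top hf

theorem abs_sub_le_setIntegral_of_abs_deriv_le {f g : ℝ → ℝ} (hf : ContDiff ℝ 1 f) {a b : ℝ}
    (hab : a ≤ b) (hg : IntegrableOn g (Ioc a b)) (hfg : ∀ t ∈ Ioc a b, |deriv f t| ≤ g t) :
    |f b - f a| ≤ ∫ t in Ioc a b, g t := by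
  have hf' : Continuous (deriv f) := hf.continuous_deriv le_rfl
  rw [← intervalIntegral.integral_deriv_eq_sub (fun x _ => hf.differentiable one_ne_zero x)
    (hf'.intervalIntegrable a b), intervalIntegral.integral_of_le hab]
  exact abs_integral_le_integral_abs.trans
    (setIntegral_mono_on hf'.abs.integrableOn_Ioc hg measurableSet_Ioc hfg)

theorem mul_le_setIntegral_prod_of_le_setIntegral {α β : Type*} [MeasurableSpace α]
    [MeasurableSpace β] {μ : Measure α} {ν : Measure β} [SFinite μ] [SFinite ν]
    {s : Set α} {t : Set β} (ht : MeasurableSet t) (hνt : ν t ≠ ⊤) {F : α × β → ℝ}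
    (hF : IntegrableOn F (s ×ˢ t) (μ.prod ν)) {c : ℝ} (hc : ∀ y ∈ t, c ≤ ∫ x in s, F (x, y) ∂μ) :
    ν.real t * c ≤ ∫ z in s ×ˢ t, F z ∂μ.prod ν := by
  have hswap : IntegrableOn (fun z => F z.swap) (t ×ˢ s) (ν.prod μ) := by
    rw [IntegrableOn, ← Measure.prod_restrict] at hF ⊢
    exact hF.swap
  rw [← setIntegral_prod_swap, setIntegral_prod _ hswap, ← smul_eq_mul, ← setIntegral_const]
  refine setIntegral_mono_on (integrableOn_const hνt) ?_ ht hc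
  rw [IntegrableOn, ← Measure.prod_restrict] at hswap
  exact hswap.integral_prod_left

theorem norm_deriv_apply_left_le_norm_fderiv {F G : Type*} [NormedAddCommGroup F]
    [NormedSpace ℝ F] [NormedAddCommGroup G] [NormedSpace ℝ G] {φ : ℝ × F → G} {t : ℝ} {y : F}
    (hφ : DifferentiableAt ℝ φ (t, y)) :
    ‖deriv (fun s => φ (s, y)) t‖ ≤ ‖fderiv ℝ φ (t, y)‖ := by
  have hpath : HasDerivAt (fun s : ℝ => (s, y)) ((1 : ℝ), (0 : F)) t :=
    (hasDerivAt_id t).prodMk (hasDerivAt_const t y)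
  have hd : HasDerivAt (fun s => φ (s, y)) (fderiv ℝ φ (t, y) (1, 0)) t :=
    hφ.hasFDerivAt.comp_hasDerivAt t hpath
  rw [hd.deriv]
  simpa using (fderiv ℝ φ (t, y)).le_opNorm ((1 : ℝ), (0 : F))

theorem one_le_setIntegral_abs_step_sub_add {f g : ℝ → ℝ} (hf : ContDiff ℝ 1 f)
    (hg : IntegrableOn g (Icc (-1) 1)) (hfg : ∀ t ∈ Icc (-1 : ℝ) 1, |deriv f t| ≤ g t) :
    1 ≤ ∫ t in Icc (-1 : ℝ) 1, (|(if 0 < t then 1 else 0) - f t| + g t) := by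
  set h : ℝ → ℝ := fun t => |(if 0 < t then 1 else 0) - f t|
  have hL : EqOn h (fun t => |f t|) (Ioc (-1) 0) := fun t ht => by simp [h, not_lt.2 ht.2]
  have hR : EqOn h (fun t => |1 - f t|) (Ioc 0 1) := fun t ht => by simp [h, ht.1]
  have hLi : IntegrableOn (fun t => |f t|) (Ioc (-1) 0) := hf.continuous.abs.integrableOn_Ioc
  have hRi : IntegrableOn (fun t => |1 - f t|) (Ioc 0 1) :=
    (continuous_const.sub hf.continuous).abs.integrableOn_Ioc
  have hhL : IntegrableOn h (Ioc (-1) 0) := hLi.congr_fun hL.symm measurableSet_Ioc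
  have hhR : IntegrableOn h (Ioc 0 1) := hRi.congr_fun hR.symm measurableSet_Ioc
  have hunion : Ioc (-1 : ℝ) 0 ∪ Ioc 0 1 = Ioc (-1) 1 :=
    Ioc_union_Ioc_eq_Ioc (by norm_num) zero_le_one
  have hh : IntegrableOn h (Icc (-1) 1) := by
    rw [integrableOn_Icc_iff_integrableOn_Ioc, ← hunion]
    exact hhL.union hhR
  have hsplit : ∫ t in Icc (-1 : ℝ) 1, h t =
      (∫ t in Ioc (-1 : ℝ) 0, |f t|) + ∫ t in Ioc (0 : ℝ) 1, |1 - f t| := by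
    rw [integral_Icc_eq_integral_Ioc, ← hunion, setIntegral_union (Ioc_disjoint_Ioc_of_le le_rfl)
      measurableSet_Ioc hhL hhR, setIntegral_congr_fun measurableSet_Ioc hL,
      setIntegral_congr_fun measurableSet_Ioc hR]
  obtain ⟨a, ha, hfa⟩ := exists_le_setIntegral_of_measureReal_eq_one (by simp) hLi
  obtain ⟨b, hb, hfb⟩ := exists_le_setIntegral_of_measureReal_eq_one (by simp) hRi
  have hab : Ioc a b ⊆ Icc (-1) 1 := Ioc_subset_Icc_self.trans (Icc_subset_Icc ha.1.le hb.2)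
  have hjump : |f b - f a| ≤ ∫ t in Icc (-1 : ℝ) 1, g t :=
    (abs_sub_le_setIntegral_of_abs_deriv_le hf (ha.2.trans hb.1.le) (hg.mono_set hab)
      fun t ht => hfg t (hab ht)).trans <| setIntegral_mono_set hg
        ((ae_restrict_iff' measurableSet_Icc).2
          (ae_of_all _ fun t ht => (abs_nonneg _).trans (hfg t ht))) (ae_of_all _ hab)
  rw [integral_add hh hg, hsplit]
  linarith [le_abs_self (f a), le_abs_self (1 - f b), le_abs_self (f b - f a)]

theorem one_le_setIntegral_abs_step_sub_add_norm_fderiv {φ : ℝ × ℝ → ℝ} (hφ : ContDiff ℝ 1 φ) :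
    1 ≤ ∫ q in Icc (-1 : ℝ) 1 ×ˢ Icc (0 : ℝ) 1,
      (|(if 0 < q.1 then 1 else 0) - φ q| + ‖fderiv ℝ φ q‖) := by
  have hK : IsCompact (Icc (-1 : ℝ) 1 ×ˢ Icc (0 : ℝ) 1) := isCompact_Icc.prod isCompact_Icc
  have hDφ : Continuous fun q => ‖fderiv ℝ φ q‖ := (hφ.continuous_fderiv one_ne_zero).norm
  have hint : IntegrableOn (fun q => |(if 0 < q.1 then 1 else 0) - φ q| + ‖fderiv ℝ φ q‖)
      (Icc (-1 : ℝ) 1 ×ˢ Icc (0 : ℝ) 1) :=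
    (memLp_one_iff_integrable.1 (memLp_restrict_abs_step_sub hK hφ.continuous 1)).add
      (hDφ.continuousOn.integrableOn_compact hK)
  rw [Measure.volume_eq_prod] at hint ⊢
  simpa using mul_le_setIntegral_prod_of_le_setIntegral measurableSet_Icc (by simp) hint
    fun y _ => one_le_setIntegral_abs_step_sub_add (hφ.comp (contDiff_id.prodMk contDiff_const))
      (hDφ.comp (continuous_id.prodMk continuous_const)).integrableOn_Icc
      fun t _ => norm_deriv_apply_left_le_norm_fderiv (hφ.differentiable one_ne_zero _)

theorem stmt_10_general
    (W : Set (ℝ × ℝ)) (hW : W = Set.Icc (-1 : ℝ) 1 ×ˢ Set.Icc (0 : ℝ) 1)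
    (u : ℝ × ℝ → ℝ) (hu : ∀ q : ℝ × ℝ, u q = if 0 < q.1 then 1 else 0)
    (p p' : ℝ) (hp : 1 ≤ p) (hpp' : 1 / p + 1 / p' = 1)
    (ε : ℝ) (hsmall : (2 + 2 ^ (1 / p')) * ε < 1) :
    ¬ ∃ φ : ℝ × ℝ → ℝ, ContDiff ℝ 1 φ ∧
        (∫ q in W, |u q - φ q| ^ p) ^ (1 / p) +
          (∫ q in W, ‖fderiv ℝ φ q‖ ^ p) ^ (1 / p) < ε := by
  rintro ⟨φ, hφ, hlt⟩
  obtain rfl : u = fun q => if 0 < q.1 then 1 else 0 := funext hu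
  subst hW
  have hK : IsCompact (Icc (-1 : ℝ) 1 ×ˢ Icc (0 : ℝ) 1) := isCompact_Icc.prod isCompact_Icc
  have := isFiniteMeasure_restrict.2 (hK.measure_lt_top (μ := volume)).ne
  have hvol : volume.real (Icc (-1 : ℝ) 1 ×ˢ Icc (0 : ℝ) 1) = 2 := by
    rw [Measure.volume_eq_prod, measureReal_prod_prod]; norm_num
  have hDφ : Continuous fun q => ‖fderiv ℝ φ q‖ := (hφ.continuous_fderiv one_ne_zero).norm
  have hdist := integral_le_rpow_integral_rpow_mul_measureReal_univ hp hpp'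
    (ae_of_all _ fun _ => abs_nonneg _) (memLp_restrict_abs_step_sub hK hφ.continuous _)
  have hgrad := integral_le_rpow_integral_rpow_mul_measureReal_univ hp hpp'
    (ae_of_all _ fun _ => norm_nonneg _)
    (hDφ.continuousOn.memLp_restrict_of_isCompact (μ := volume) hK _)
  rw [measureReal_restrict_apply_univ, hvol] at hdist hgrad
  have hone := one_le_setIntegral_abs_step_sub_add_norm_fderiv hφ
  rw [integral_add (memLp_one_iff_integrable.1 (memLp_restrict_abs_step_sub hK hφ.continuous 1))
    (hDφ.continuousOn.integrableOn_compact hK)] at hone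
  have hε : 0 < ε := lt_of_le_of_lt (by positivity) hlt
  have hc : (0 : ℝ) ≤ 2 ^ (1 / p') := by positivity
  linarith [mul_le_mul_of_nonneg_left hlt.le hc]

theorem stmt_10
    (W : Set (ℝ × ℝ)) (hW : W = Set.Icc (-1 : ℝ) 1 ×ˢ Set.Icc (0 : ℝ) 1)
    (u : ℝ × ℝ → ℝ) (hu : ∀ q : ℝ × ℝ, u q = if 0 < q.1 then 1 else 0)
    (p p' : ℝ) (hp : 1 ≤ p) (hpp' : 1 / p + 1 / p' = 1)
    (ε : ℝ) (hε : 0 < ε) (hsmall : (2 + 2 ^ (1 / p')) * ε < 1) :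
    ¬ ∃ φ : ℝ × ℝ → ℝ, ContDiff ℝ 1 φ ∧
        (∫ q in W, |u q - φ q| ^ p) ^ (1 / p) +
          (∫ q in W, ‖fderiv ℝ φ q‖ ^ p) ^ (1 / p) < ε :=
  stmt_10_general W hW u hu p p' hp hpp' ε hsmall
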